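/- arXiv:math/0701032 — 5 statements merged into one kernel-verified Lean document; each statement's English description precedes it below -/
import Mathlib

section
/- Let k, n, t, s be natural numbers with t ≤ k. The number of words w ∈ [k]^n such that lev_{[t]}(w) = s (i.e. with exactly s levels whose first element lies in {1,...,t}) equals Σ_{m=0}^{n} Σ_{i=0}^{m} (−1)^{n−m−s} C(m,i) · C(i+n−m−1, n−m) · C(n−m, s) · (k−t)^{m−i} · t^{i}. -/
open Finset

/-- The number of levels of the word `w : Fin n → Fin k` (encoding a word over the
alphabet `[k] = {1,…,k}`, position `p` carrying the letter `(w p : ℕ) + 1`) whose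
first element satisfies `X`. -/
def levCount (X : ℕ → Prop) [DecidablePred X] {k n : ℕ} (w : Fin n → Fin k) : ℕ :=
  (Finset.univ.filter (fun p : Fin n × Fin n =>
    (p.1 : ℕ) + 1 = (p.2 : ℕ) ∧ w p.1 = w p.2 ∧ X ((w p.1 : ℕ) + 1))).card

/-!
Write `z = 1 + y`. Then `∑_w z ^ lev w` counts words with a chosen set of `p` levels in `[t]`,
weighted by `y ^ p`. Collapsing the chosen levels leaves a word of length `m = n - p` with some
number `i` of letters in `[t]`, and the `p` deleted letters are spread over these `i` runs in
`multichoose i p` ways. Substituting `y = z - 1` and reading off the coefficient of `z ^ s`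
gives the alternating sum. The closed form in `y` is verified not through the collapsing
bijection but through the first-letter recurrence it shares with the enumerator, taken jointly
with the enumerator of words whose first letter lies in `[t]`.
-/

open Polynomial

section BinomialSum
variable {R : Type*} [CommSemiring R]

def binomialSum (a b : R) (f : ℕ → R) (m : ℕ) : R :=
  ∑ i ∈ range (m + 1), (m.choose i : R) * a ^ (m - i) * b ^ i * f i

lemma binomialSum_zero (a b : R) (f : ℕ → R) : binomialSum a b f 0 = f 0 := by
  simp [binomialSum]

lemma binomialSum_succ (a b : R) (f : ℕ → R) (m : ℕ) :
    binomialSum a b f (m + 1)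
      = a * binomialSum a b f m + b * binomialSum a b (f ∘ (· + 1)) m := by
  calc binomialSum a b f (m + 1)
      = ∑ i ∈ range (m + 2), ((m + 1).choose i : R) * (a ^ (m + 1 - i) * b ^ i * f i) :=
        sum_congr rfl fun _ _ => by ring
    _ = _ := sum_choose_succ_mul (fun i j => a ^ j * b ^ i * f i) m
    _ = _ := by
      simp only [binomialSum, mul_sum]
      congr 1
      · refine sum_congr rfl fun i hi => ?_
        rw [Nat.sub_add_comm (Nat.lt_succ_iff.1 (mem_range.1 hi))]
        ring
      · refine sum_congr rfl fun i _ => ?_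
        simp only [Function.comp_apply]
        ring

lemma binomialSum_add (a b : R) (f g : ℕ → R) (m : ℕ) :
    binomialSum a b (fun i => f i + g i) m = binomialSum a b f m + binomialSum a b g m := by
  simp only [binomialSum, mul_add, sum_add_distrib]

lemma map_binomialSum {S : Type*} [CommSemiring S] (φ : R →+* S) (a b : R) (f : ℕ → R)
    (m : ℕ) :
    φ (binomialSum a b f m) = binomialSum (φ a) (φ b) (φ ∘ f) m := by
  simp [binomialSum]

/-- A term `q = (m, p)` counts collapsed words of length `m` carrying `p` chosen levels: `i` of
their letters are marked (weight `b`), the others not (weight `a`), and the `p` extra letters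
are distributed over the `i` marked runs. -/
def levelWeightFormula (a b y : R) (n : ℕ) : R :=
  ∑ q ∈ antidiagonal n, binomialSum a b (fun i => (i.multichoose q.2 : R)) q.1 * y ^ q.2

/-- The analogue of `levelWeightFormula` for words of length `n + 1` starting with a marked
letter, whose run is one more place to put extra letters. -/
def markedWeightFormula (a b y : R) (n : ℕ) : R :=
  b * ∑ q ∈ antidiagonal n,
    binomialSum a b (fun i => ((i + 1).multichoose q.2 : R)) q.1 * y ^ q.2

variable (a b y : R)

lemma levelWeightFormula_zero : levelWeightFormula a b y 0 = 1 := by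
  simp [levelWeightFormula, binomialSum_zero]

lemma markedWeightFormula_zero : markedWeightFormula a b y 0 = b := by
  simp [markedWeightFormula, binomialSum_zero]

lemma levelWeightFormula_succ (n : ℕ) :
    levelWeightFormula a b y (n + 1)
      = a * levelWeightFormula a b y n + markedWeightFormula a b y n := by
  rw [levelWeightFormula, Nat.sum_antidiagonal_succ, levelWeightFormula, markedWeightFormula,
    mul_sum, mul_sum, ← sum_add_distrib]
  simp only [binomialSum_zero, Nat.multichoose_zero_succ, Nat.cast_zero, zero_mul, zero_add]
  refine sum_congr rfl fun q _ => ?_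
  rw [binomialSum_succ]
  simp only [Function.comp_def]
  ring

lemma markedWeightFormula_succ (n : ℕ) :
    markedWeightFormula a b y (n + 1)
      = b * levelWeightFormula a b y (n + 1) + y * markedWeightFormula a b y n := by
  rw [markedWeightFormula, Nat.sum_antidiagonal_succ', levelWeightFormula,
    Nat.sum_antidiagonal_succ', markedWeightFormula]
  simp only [Nat.multichoose_zero_right, Nat.multichoose_succ_succ, Nat.cast_add, binomialSum_add,
    add_mul, sum_add_distrib, pow_succ, ← mul_assoc, ← sum_mul]
  ring
end BinomialSum

section LevelWeight
variable (p : ℕ → Prop) [DecidablePred p] {k : ℕ}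

lemma levCount_eq_sum {n : ℕ} (w : Fin n → Fin k) :
    levCount p w = ∑ i : Fin n, ∑ j : Fin n,
      if (i : ℕ) + 1 = j ∧ w i = w j ∧ p ((w i : ℕ) + 1) then 1 else 0 := by
  rw [levCount, card_filter, ← sum_product', univ_product_univ]

lemma levCount_cons {n : ℕ} (x : Fin k) (w : Fin (n + 1) → Fin k) :
    levCount p (Fin.cons x w : Fin (n + 2) → Fin k)
      = levCount p w + if x = w 0 ∧ p ((x : ℕ) + 1) then 1 else 0 := by
  rw [levCount_eq_sum, levCount_eq_sum, Fin.sum_univ_succ, add_comm]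
  congr 1
  · refine sum_congr rfl fun i _ => ?_
    simp [Fin.sum_univ_succ (n := n + 1)]
  · rw [sum_eq_single (1 : Fin (n + 2))]
    · simp [Fin.cons_one]
    · intro j _ hj
      simp only [ne_eq, Fin.ext_iff, Fin.coe_ofNat_eq_mod, Nat.one_mod, Nat.zero_mod, zero_add,
        Fin.cons_zero, ite_eq_right_iff, one_ne_zero, imp_false, not_and] at hj ⊢
      omega
    · simp

lemma levCount_of_le_one {n : ℕ} (hn : n ≤ 1) (w : Fin n → Fin k) : levCount p w = 0 := by
  rw [levCount, card_eq_zero, filter_eq_empty_iff]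
  rintro ⟨i, j⟩ -
  have := i.2; have := j.2
  omega

def markedLetters (k : ℕ) : Finset (Fin k) := {x | p ((x : ℕ) + 1)}

variable {R : Type*} [CommRing R]

def levelWeight (k n : ℕ) (z : R) : R := ∑ w : Fin n → Fin k, z ^ levCount p w

def levelWeightFrom (x : Fin k) (n : ℕ) (z : R) : R :=
  ∑ w : Fin n → Fin k, z ^ levCount p (Fin.cons x w : Fin (n + 1) → Fin k)

def markedWeight (k n : ℕ) (z : R) : R := ∑ x ∈ markedLetters p k, levelWeightFrom p x n z

lemma levelWeight_zero (z : R) : levelWeight p k 0 z = 1 := by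
  simp [levelWeight, levCount_of_le_one]

lemma levelWeight_succ_eq_sum (n : ℕ) (z : R) :
    levelWeight p k (n + 1) z = ∑ x : Fin k, levelWeightFrom p x n z := by
  rw [levelWeight, ← (Fin.consEquiv fun _ => Fin k).sum_comp, Fintype.sum_prod_type]
  rfl

lemma levelWeightFrom_zero (x : Fin k) (z : R) : levelWeightFrom p x 0 z = 1 := by
  simp [levelWeightFrom, levCount_of_le_one]

lemma levelWeightFrom_succ (x : Fin k) (n : ℕ) (z : R) :
    levelWeightFrom p x (n + 1) z
      = levelWeight p k (n + 1) z + if p ((x : ℕ) + 1) then (z - 1) * levelWeightFrom p x n z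
        else 0 := by
  have hpow : ∀ y : Fin k, ∀ w : Fin n → Fin k,
      z ^ levCount p (Fin.cons x (Fin.cons y w : Fin (n + 1) → Fin k) : Fin (n + 2) → Fin k)
        = z ^ levCount p (Fin.cons y w : Fin (n + 1) → Fin k)
          + (if x = y ∧ p ((x : ℕ) + 1) then z - 1 else 0)
            * z ^ levCount p (Fin.cons y w : Fin (n + 1) → Fin k) := by
    intro y w
    rw [levCount_cons, Fin.cons_zero, pow_add]
    split_ifs <;> ring
  rw [levelWeightFrom, ← (Fin.consEquiv fun _ => Fin k).sum_comp, Fintype.sum_prod_type,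
    levelWeight_succ_eq_sum]
  simp only [Fin.consEquiv, Equiv.coe_fn_mk, hpow, sum_add_distrib, ← mul_sum]
  congr 1
  simp only [ite_and, ite_mul, zero_mul, sum_ite_eq, mem_univ, if_true]
  rfl

lemma levelWeightFrom_of_not_marked {x : Fin k} (hx : ¬ p ((x : ℕ) + 1)) (n : ℕ) (z : R) :
    levelWeightFrom p x n z = levelWeight p k n z := by
  cases n with
  | zero => rw [levelWeightFrom_zero, levelWeight_zero]
  | succ n => rw [levelWeightFrom_succ, if_neg hx, add_zero]

lemma levelWeight_succ (n : ℕ) (z : R) :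
    levelWeight p k (n + 1) z
      = (k - #(markedLetters p k)) * levelWeight p k n z + markedWeight p k n z := by
  rw [levelWeight_succ_eq_sum, ← sum_filter_not_add_sum_filter _ (fun x : Fin k => p (x + 1)),
    markedWeight, markedLetters]
  congr 1
  rw [sum_congr rfl fun x hx => levelWeightFrom_of_not_marked p (mem_filter.1 hx).2 n z,
    sum_const, nsmul_eq_mul]
  congr 1
  rw [eq_sub_iff_add_eq, ← Nat.cast_add, add_comm, card_filter_add_card_filter_not, card_univ,
    Fintype.card_fin]

lemma markedWeight_zero (z : R) : markedWeight p k 0 z = #(markedLetters p k) := by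
  simp [markedWeight, levelWeightFrom_zero]

lemma markedWeight_succ (n : ℕ) (z : R) :
    markedWeight p k (n + 1) z
      = #(markedLetters p k) * levelWeight p k (n + 1) z + (z - 1) * markedWeight p k n z := by
  rw [markedWeight, markedWeight, mul_sum, ← nsmul_eq_mul, ← sum_const, ← sum_add_distrib]
  refine sum_congr rfl fun x hx => ?_
  rw [levelWeightFrom_succ, if_pos (by simpa [markedLetters] using hx)]

lemma levelWeight_eq_levelWeightFormula (n : ℕ) (z : R) :
    levelWeight p k n z
      = levelWeightFormula ((k : R) - #(markedLetters p k)) (#(markedLetters p k) : R) (z - 1)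
          n := by
  set a : R := (k : R) - #(markedLetters p k)
  set b : R := (#(markedLetters p k) : R)
  suffices levelWeight p k n z = levelWeightFormula a b (z - 1) n ∧
      markedWeight p k n z = markedWeightFormula a b (z - 1) n from this.1
  induction n with
  | zero => exact ⟨by rw [levelWeight_zero, levelWeightFormula_zero],
      by rw [markedWeight_zero, markedWeightFormula_zero]⟩
  | succ n ih =>
    have hlevel : levelWeight p k (n + 1) z = levelWeightFormula a b (z - 1) (n + 1) := by
      rw [levelWeight_succ, levelWeightFormula_succ, ih.1, ih.2]
    exact ⟨hlevel, by rw [markedWeight_succ, markedWeightFormula_succ, hlevel, ih.2]⟩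

end LevelWeight

lemma coeff_X_sub_one_pow (m s : ℕ) :
    ((X - 1 : ℤ[X]) ^ m).coeff s = (-1) ^ (m + s) * m.choose s := by
  rw [sub_eq_add_neg, ← C_1, ← C_neg, coeff_X_add_C_pow]
  rcases le_or_gt s m with hs | hs
  · rw [show m + s = m - s + 2 * s by omega, pow_add, pow_mul, neg_one_sq, one_pow, mul_one]
  · simp [Nat.choose_eq_zero_of_lt hs]

section Count
variable (p : ℕ → Prop) [DecidablePred p] (k : ℕ)

lemma coeff_levelWeight_X (n s : ℕ) :
    (levelWeight p k n (X : ℤ[X])).coeff s = #{w : Fin n → Fin k | levCount p w = s} := by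
  simp only [levelWeight, finsetSum_coeff, coeff_X_pow, eq_comm (a := s), sum_boole]

theorem card_levCount_eq_sum (n s : ℕ) :
    (#{w : Fin n → Fin k | levCount p w = s} : ℤ)
      = ∑ q ∈ antidiagonal n,
          binomialSum ((k : ℤ) - #(markedLetters p k)) (#(markedLetters p k) : ℤ)
            (fun i => (i.multichoose q.2 : ℤ)) q.1 * ((-1) ^ (q.2 + s) * q.2.choose s) := by
  rw [← coeff_levelWeight_X, levelWeight_eq_levelWeightFormula, levelWeightFormula,
    finsetSum_coeff]
  refine sum_congr rfl fun q _ => ?_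
  rw [← coeff_X_sub_one_pow, ← coeff_C_mul, map_binomialSum]
  simp [Function.comp_def]
end Count

lemma card_markedLetters_Icc {k t : ℕ} (ht : t ≤ k) :
    #(markedLetters (fun x => 1 ≤ x ∧ x ≤ t) k) = t := by
  simp only [markedLetters, le_add_iff_nonneg_left, zero_le, true_and, Nat.add_one_le_iff,
    Fin.card_filter_val_lt, min_eq_right ht]

theorem stmt_0 (k n t s : ℕ) (ht : t ≤ k) :
    ((Finset.univ.filter (fun w : Fin n → Fin k =>
        levCount (fun x => 1 ≤ x ∧ x ≤ t) w = s)).card : ℤ)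
      = ∑ m ∈ Finset.range (n + 1), ∑ i ∈ Finset.range (m + 1),
          (-1 : ℤ) ^ (n + m + s) *
            ((m.choose i * (i + n - m - 1).choose (n - m) * (n - m).choose s
              * (k - t) ^ (m - i) * t ^ i : ℕ) : ℤ) := by
  rw [card_levCount_eq_sum, card_markedLetters_Icc ht, Nat.sum_antidiagonal_eq_sum_range_succ_mk]
  refine sum_congr rfl fun m hm => ?_
  have hmn : m ≤ n := Nat.lt_succ_iff.1 (mem_range.1 hm)
  rw [binomialSum, sum_mul]
  refine sum_congr rfl fun i _ => ?_
  rw [Nat.multichoose_eq, show i + (n - m) - 1 = i + n - m - 1 by omega,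
    show n + m + s = n - m + s + 2 * m by omega, pow_add _ (n - m + s), pow_mul, neg_one_sq,
    one_pow, mul_one]
  push_cast [Nat.cast_sub ht]
  ring
end

section
/- Let k ≥ 1 and n, s ≥ 0. The number of words w ∈ [k]^n such that des_{{k}}(w) = s (descents whose first element equals k) is Σ_{r=s}^{n−s} (k−1)^{r} · C(r, s) · C(n−r, s). -/
/-!
Write `m = k - 1` and call `k` the top letter. Prepending a non-top letter creates no top
descent, while prepending the top letter creates one exactly when the next letter is not top.
So the number `T n s` of words of length `n` with `s` top descents and the number `H n s` of
words of length `n + 1` starting with the top letter satisfy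
`T (n+1) s = m T n s + H n s`, `H (n+1) (s+1) = m T n s + H n (s+1)`, `H n 0 = 1`.
Pascal's rule shows that `T n s = ∑ r, m^r C(r,s) C(n-r,s)` and
`H n (s+1) = m ∑ r, m^r C(r,s) C(n-r,s+1)` solve the same system.
-/

open Finset

/-- The number of descents of the word `w : Fin n → Fin k` (encoding a word over the
alphabet `[k] = {1,…,k}`, position `p` carrying the letter `(w p : ℕ) + 1`) whose
first element satisfies `X`. -/
def descCount (X : ℕ → Prop) [DecidablePred X] {k n : ℕ} (w : Fin n → Fin k) : ℕ :=
  (Finset.univ.filter (fun p : Fin n × Fin n =>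
    (p.1 : ℕ) + 1 = (p.2 : ℕ) ∧ (w p.2 : ℕ) < (w p.1 : ℕ) ∧ X ((w p.1 : ℕ) + 1))).card

section Descents

variable (X : ℕ → Prop) [DecidablePred X] {k n : ℕ}

lemma descCount_eq_card (w : Fin (n + 1) → Fin k) :
    descCount X w = #{i : Fin n | w i.succ < w i.castSucc ∧ X (w i.castSucc + 1)} := by
  symm
  apply card_nbij (fun i => (i.castSucc, i.succ))
  · intro i hi
    simp only [coe_filter, Set.mem_ofPred_eq, mem_univ, true_and] at hi ⊢
    exact ⟨rfl, hi⟩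
  · intro i _ j _ h
    simpa using congrArg Prod.fst h
  · rintro ⟨p, q⟩ hpq
    simp only [coe_filter, Set.mem_ofPred_eq, mem_univ, true_and] at hpq
    obtain ⟨hpq, hdesc⟩ := hpq
    have hp : (p : ℕ) < n := by omega
    refine ⟨⟨p, hp⟩, ?_, ?_⟩
    · have hq : (⟨p, hp⟩ : Fin n).succ = q := Fin.ext hpq
      simpa [hq] using hdesc
    · ext <;> simp [hpq]

lemma descCount_of_length_zero (w : Fin 0 → Fin k) : descCount X w = 0 := by
  simp [descCount]

lemma descCount_of_length_one (w : Fin 1 → Fin k) : descCount X w = 0 := by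
  simp [descCount_eq_card]

lemma descCount_cons (a : Fin k) (w : Fin (n + 1) → Fin k) :
    descCount X (Fin.cons a w : Fin (n + 2) → Fin k)
      = descCount X w + if w 0 < a ∧ X (a + 1) then 1 else 0 := by
  rw [descCount_eq_card, descCount_eq_card, card_filter, card_filter, Fin.sum_univ_succ,
    add_comm]
  simp

lemma descCount_cons_of_not (a : Fin k) (ha : ¬ X (a + 1)) (w : Fin n → Fin k) :
    descCount X (Fin.cons a w : Fin (n + 1) → Fin k) = descCount X w := by
  cases n with
  | zero => rw [descCount_of_length_one, descCount_of_length_zero]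
  | succ n => simp [descCount_cons, ha]

end Descents

lemma card_filter_cons {α : Type*} [Fintype α] {n : ℕ} (p : (Fin (n + 1) → α) → Prop)
    [DecidablePred p] :
    #{v | p v} = ∑ a, #{w : Fin n → α | p (Fin.cons a w)} := by
  simp only [card_filter]
  rw [← (Fin.consEquiv fun _ => α).sum_comp, Fintype.sum_prod_type]
  rfl

section TopDescents

variable (m : ℕ)

def topDescWordCount (n s : ℕ) : ℕ :=
  #{w : Fin n → Fin (m + 1) | descCount (· = m + 1) w = s}

def topStartWordCount (n s : ℕ) : ℕ :=
  #{w : Fin n → Fin (m + 1) | descCount (· = m + 1) (Fin.cons (Fin.last m) w) = s}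

variable {m}

lemma descCount_cons_castSucc {n : ℕ} (i : Fin m) (w : Fin n → Fin (m + 1)) :
    descCount (· = m + 1) (Fin.cons i.castSucc w) = descCount (· = m + 1) w :=
  descCount_cons_of_not _ _ (by simp [i.isLt.ne]) w

lemma descCount_cons_last_cons_castSucc {n : ℕ} (i : Fin m) (w : Fin n → Fin (m + 1)) :
    descCount (· = m + 1)
        (Fin.cons (Fin.last m) (Fin.cons i.castSucc w : Fin (n + 1) → Fin (m + 1)))
      = descCount (· = m + 1) w + 1 := by
  simp [descCount_cons, descCount_cons_castSucc, Fin.castSucc_lt_last]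

lemma descCount_cons_last_cons_last {n : ℕ} (w : Fin n → Fin (m + 1)) :
    descCount (· = m + 1)
        (Fin.cons (Fin.last m) (Fin.cons (Fin.last m) w : Fin (n + 1) → Fin (m + 1)))
      = descCount (· = m + 1) (Fin.cons (Fin.last m) w) := by
  simp [descCount_cons]

variable (m)

lemma topDescWordCount_zero (s : ℕ) : topDescWordCount m 0 s = if s = 0 then 1 else 0 := by
  split_ifs with hs <;> simp [topDescWordCount, descCount_of_length_zero, hs, eq_comm]

lemma topStartWordCount_zero (s : ℕ) : topStartWordCount m 0 s = if s = 0 then 1 else 0 := by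
  split_ifs with hs <;> simp [topStartWordCount, descCount_of_length_one, hs, eq_comm]

lemma topDescWordCount_succ (n s : ℕ) :
    topDescWordCount m (n + 1) s = m * topDescWordCount m n s + topStartWordCount m n s := by
  simp [topDescWordCount, topStartWordCount, card_filter_cons (n := n), Fin.sum_univ_castSucc,
    descCount_cons_castSucc]

lemma topStartWordCount_succ_zero (n : ℕ) :
    topStartWordCount m (n + 1) 0 = topStartWordCount m n 0 := by
  simp [topStartWordCount, card_filter_cons (n := n), Fin.sum_univ_castSucc,
    descCount_cons_last_cons_castSucc, descCount_cons_last_cons_last]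

lemma topStartWordCount_succ_succ (n s : ℕ) :
    topStartWordCount m (n + 1) (s + 1)
      = m * topDescWordCount m n s + topStartWordCount m n (s + 1) := by
  simp [topStartWordCount, topDescWordCount, card_filter_cons (n := n), Fin.sum_univ_castSucc,
    descCount_cons_last_cons_castSucc, descCount_cons_last_cons_last]

lemma topStartWordCount_zero_right (n : ℕ) : topStartWordCount m n 0 = 1 := by
  induction n with
  | zero => simp [topStartWordCount_zero]
  | succ n ih => rw [topStartWordCount_succ_zero, ih]

end TopDescents

section Formula

variable (m : ℕ)

def descFormula (n s : ℕ) : ℕ :=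
  ∑ r ∈ range (n + 1), m ^ r * r.choose s * (n - r).choose s

def topStartFormula (n s : ℕ) : ℕ :=
  ∑ r ∈ range (n + 1), m ^ r * r.choose s * (n - r).choose (s + 1)

lemma descFormula_zero_left (s : ℕ) : descFormula m 0 s = if s = 0 then 1 else 0 := by
  rcases s with _ | s <;> simp [descFormula]

lemma topStartFormula_zero_left (s : ℕ) : topStartFormula m 0 s = 0 := by
  simp [topStartFormula]

lemma descFormula_succ_zero (n : ℕ) : descFormula m (n + 1) 0 = m * descFormula m n 0 + 1 := by
  simp [descFormula, sum_range_succ' _ (n + 1), mul_sum, pow_succ, mul_comm]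

lemma descFormula_succ_succ (n s : ℕ) :
    descFormula m (n + 1) (s + 1) = m * descFormula m n (s + 1) + m * topStartFormula m n s := by
  rw [descFormula, descFormula, topStartFormula, sum_range_succ', ← mul_add, ← sum_add_distrib,
    mul_sum]
  simp only [Nat.choose_zero_succ, mul_zero, zero_mul, add_zero]
  refine sum_congr rfl fun r _ => ?_
  rw [Nat.add_sub_add_right, Nat.choose_succ_succ, pow_succ]
  ring

lemma topStartFormula_succ (n s : ℕ) :
    topStartFormula m (n + 1) s = descFormula m n s + topStartFormula m n s := by
  rw [topStartFormula, topStartFormula, descFormula, sum_range_succ, Nat.sub_self,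
    Nat.choose_zero_succ, mul_zero, add_zero, ← sum_add_distrib]
  refine sum_congr rfl fun r hr => ?_
  rw [Nat.sub_add_comm (mem_range_succ_iff.mp hr), Nat.choose_succ_succ]
  ring

lemma sum_Icc_eq_descFormula (n s : ℕ) :
    ∑ r ∈ Icc s (n - s), m ^ r * r.choose s * (n - r).choose s = descFormula m n s := by
  refine sum_subset (fun r hr => ?_) (fun r hr hr' => ?_)
  · simp only [mem_Icc, mem_range] at hr ⊢
    omega
  · simp only [mem_Icc, mem_range, not_and_or, not_le] at hr hr'
    rcases hr' with hr' | hr'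
    · simp [Nat.choose_eq_zero_of_lt hr']
    · simp [Nat.choose_eq_zero_of_lt (show n - r < s by omega)]

end Formula

lemma topDescWordCount_eq_descFormula (m n s : ℕ) :
    topDescWordCount m n s = descFormula m n s := by
  suffices h : ∀ s, topDescWordCount m n s = descFormula m n s ∧
      topStartWordCount m n (s + 1) = m * topStartFormula m n s from (h s).1
  induction n with
  | zero =>
    intro s
    simp [topDescWordCount_zero, descFormula_zero_left, topStartWordCount_zero,
      topStartFormula_zero_left]
  | succ n ih =>
    intro s
    constructor
    · rcases s with _ | s
      · rw [topDescWordCount_succ, descFormula_succ_zero, (ih 0).1,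
          topStartWordCount_zero_right]
      · rw [topDescWordCount_succ, descFormula_succ_succ, (ih (s + 1)).1, (ih s).2]
    · rw [topStartWordCount_succ_succ, topStartFormula_succ, (ih s).1, (ih s).2, mul_add]

theorem stmt_5 (k n s : ℕ) (hk : 1 ≤ k) :
    (Finset.univ.filter (fun w : Fin n → Fin k =>
        descCount (fun x => x = k) w = s)).card
      = ∑ r ∈ Finset.Icc s (n - s), (k - 1) ^ r * r.choose s * (n - r).choose s := by
  obtain ⟨m, rfl⟩ : ∃ m, k = m + 1 := ⟨k - 1, by omega⟩
  rw [Nat.add_sub_cancel, sum_Icc_eq_descFormula]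
  exact topDescWordCount_eq_descFormula m n s
end

section
/- For all natural numbers n, r, s with s ≤ r ≤ n−s, the binomial identity C(r,s) · C(n−r,s) = Σ_{m=r}^{n−s} Σ_{a=r}^{m} (−1)^{n−a−s} C(m,a) · C(a,r) · C(a,n−r) · C(n−m,s) holds. -/
/-!
Both sums collapse through the forward-difference identity
`∑ₖ (-1)^(M-k) C(M,k) C(x+k, M+j) = C(x, j)`, i.e. `Δ^M` applied to `x ↦ C(x, M+j)`.
After `C(m,a) C(a,r) = C(m,r) C(m-r,a-r)`, the inner sum over `a` is such a difference and
equals `± C(m,r) C(r,n-m)`. Then `C(r,n-m) C(n-m,s) = C(r,s) C(r-s,n-m-s)` turns the remaining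
sum over `m` into another one, which equals `C(r,s) C(n-r,s)`.
-/

open Finset

theorem sum_range_neg_one_pow_mul_choose_mul_add_choose (M x j : ℕ) :
    ∑ k ∈ range (M + 1), (-1 : ℤ) ^ (M - k) * M.choose k * (x + k).choose (M + j)
      = x.choose j := by
  have h := fwdDiff_iter_eq_sum_shift 1 (fun y ↦ (y.choose (M + j) : ℤ)) M x
  rw [fwdDiff_iter_choose] at h
  simpa using h.symm

theorem sum_Icc_eq_sum_Icc_zero_of_eq_zero {M : Type*} [AddCommMonoid M] {f : ℕ → M} {a : ℕ}
    (hf : ∀ i < a, f i = 0) (b : ℕ) :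
    ∑ i ∈ Icc a b, f i = ∑ i ∈ Icc 0 b, f i :=
  sum_subset (Icc_subset_Icc_left (Nat.zero_le a)) fun i hi hia ↦
    hf i (by simp only [mem_Icc] at hi hia; omega)

theorem sum_Icc_neg_one_pow_mul_choose_mul_choose_mul_choose {r m : ℕ} (hrm : r ≤ m) (q : ℕ) :
    ∑ a ∈ Icc r m, (-1 : ℤ) ^ (m - a) * m.choose a * a.choose r * a.choose (m - r + q)
      = m.choose r * r.choose q := by
  rw [← Ico_add_one_right_eq_Icc, sum_Ico_eq_sum_range, show m + 1 - r = m - r + 1 by omega,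
    ← sum_range_neg_one_pow_mul_choose_mul_add_choose (m - r) r q, mul_sum]
  refine sum_congr rfl fun k _ ↦ ?_
  have hchoose : (m.choose (r + k) * (r + k).choose r : ℤ) = m.choose r * (m - r).choose k := by
    exact_mod_cast (Nat.choose_mul (Nat.le_add_right r k)).trans (by simp)
  rw [show m - (r + k) = m - r - k by omega]
  linear_combination (-1 : ℤ) ^ (m - r - k) * (r + k).choose (m - r + q) * hchoose

theorem sum_Icc_neg_one_pow_mul_choose_mul_choose_sub_mul_choose_sub {n r s : ℕ} (hs : s ≤ r)
    (hr : r + s ≤ n) :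
    ∑ m ∈ Icc r (n - s),
        (-1 : ℤ) ^ (n - s - m) * m.choose r * r.choose (n - m) * (n - m).choose s
      = r.choose s * (n - r).choose s := by
  set F : ℕ → ℤ :=
    fun m ↦ (-1 : ℤ) ^ (n - s - m) * m.choose r * r.choose (n - m) * (n - m).choose s
  have hF_of_lt : ∀ m < r, F m = 0 := fun m hm ↦ by simp [F, Nat.choose_eq_zero_of_lt hm]
  have hF_of_lt_sub : ∀ m < n - r, F m = 0 := fun m hm ↦ by
    simp [F, Nat.choose_eq_zero_of_lt (show r < n - m by omega)]
  change ∑ m ∈ Icc r (n - s), F m = _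
  -- on `[n - r, n - s]`, which also carries all nonzero terms, the sum is a forward difference
  rw [sum_Icc_eq_sum_Icc_zero_of_eq_zero hF_of_lt,
    ← sum_Icc_eq_sum_Icc_zero_of_eq_zero hF_of_lt_sub, ← Ico_add_one_right_eq_Icc,
    sum_Ico_eq_sum_range, show n - s + 1 - (n - r) = r - s + 1 by omega,
    ← sum_range_neg_one_pow_mul_choose_mul_add_choose (r - s) (n - r) s, mul_sum]
  refine sum_congr rfl fun k hk ↦ ?_
  rw [mem_range] at hk
  have hchoose : (r.choose (r - k) * (r - k).choose s : ℤ) = r.choose s * (r - s).choose k := by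
    exact_mod_cast (Nat.choose_mul (by omega : s ≤ r - k)).trans
      (by rw [Nat.choose_symm_of_eq_add (show r - s = r - k - s + k by omega)])
  simp only [F, show n - s - (n - r + k) = r - s - k by omega,
    show n - (n - r + k) = r - k by omega, show r - s + s = r by omega]
  linear_combination (-1 : ℤ) ^ (r - s - k) * (n - r + k).choose r * hchoose

theorem stmt_6 (n r s : ℕ) (hs : s ≤ r) (hr : r + s ≤ n) :
    ((r.choose s * (n - r).choose s : ℕ) : ℤ)
      = ∑ m ∈ Finset.Icc r (n - s), ∑ a ∈ Finset.Icc r m,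
          (-1 : ℤ) ^ (n + a + s) *
            ((m.choose a * a.choose r * a.choose (n - r) * (n - m).choose s : ℕ) : ℤ) := by
  have inner : ∀ m ∈ Icc r (n - s), ∑ a ∈ Icc r m, (-1 : ℤ) ^ (n + a + s) *
      ((m.choose a * a.choose r * a.choose (n - r) * (n - m).choose s : ℕ) : ℤ)
        = (-1 : ℤ) ^ (n - s - m) * m.choose r * r.choose (n - m) * (n - m).choose s := by
    intro m hm
    rw [mem_Icc] at hm
    have hsum := sum_Icc_neg_one_pow_mul_choose_mul_choose_mul_choose hm.1 (n - m)
    rw [show m - r + (n - m) = n - r by omega] at hsum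
    rw [show (-1 : ℤ) ^ (n - s - m) * m.choose r * r.choose (n - m) * (n - m).choose s
        = (-1 : ℤ) ^ (n - s - m) * (n - m).choose s * (m.choose r * r.choose (n - m)) by ring,
      ← hsum, mul_sum]
    refine sum_congr rfl fun a ha ↦ ?_
    rw [mem_Icc] at ha
    have hsign : (-1 : ℤ) ^ (n + a + s) = (-1) ^ (n - s - m) * (-1) ^ (m - a) := by
      rw [← pow_add, neg_one_pow_eq_pow_mod_two, neg_one_pow_eq_pow_mod_two (n - s - m + _)]
      congr 1
      omega
    rw [hsign]
    push_cast
    ring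
  rw [sum_congr rfl inner, sum_Icc_neg_one_pow_mul_choose_mul_choose_sub_mul_choose_sub hs hr]
  norm_cast
end

section
/- For all natural numbers n, r, s, the following binomial identity holds: Σ_{a=s}^{n−s} C(r+s, s) · C(a+r, a−s) · C(n−a, n−a−r−s) = Σ_{m=0}^{n} Σ_{a=0}^{m−r} (−1)^{n−a−r−s} C(m,a) · C(m−a, r) · C(2a, n−r) · C(n−m, s). -/
/-!
Put `q = r + s` and `G = (1 - X)⁻¹ ^ (q + 1) = ∑ C(i + q, q) Xⁱ`. After the substitution
`a = s + i`, the left-hand side is `C(q, s)` times the coefficient of `X ^ (n - r - 2s)` in `G²`.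
On the right-hand side, trinomial revision and the binomial theorem turn the alternating sum over
`a` into a coefficient of `u ^ (m - r)` with `u = 2X - X² = 1 - (1 - X)²`; absorbing `C(n - m, s)`
into that coefficient leaves `C(q, s)` times the coefficient of `X ^ (n - r - 2s)` in `G(u)`.
Since `1 - u = (1 - X)²`, `G(u) = G²`, and both sides equal `C(q, s) · C(n + r + 1, 2q + 1)`.
-/

open Finset

theorem Nat.choose_mul_choose_sub_comm (m a r : ℕ) :
    m.choose a * (m - a).choose r = m.choose r * (m - r).choose a := by
  have h₁ := Nat.choose_mul (n := m) (Nat.le_add_right a r)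
  have h₂ := Nat.choose_mul (n := m) (Nat.le_add_left r a)
  rw [Nat.add_sub_cancel_left] at h₁
  rw [Nat.add_sub_cancel, ← Nat.choose_symm_add] at h₂
  rw [← h₁, h₂]

theorem Nat.add_choose_mul_choose (r N s : ℕ) :
    (r + N).choose r * N.choose s = (r + s).choose s * (r + N).choose (r + s) := by
  have h := Nat.choose_mul (n := r + N) (Nat.le_add_left s r)
  have h' := Nat.choose_mul_choose_sub_comm (r + N) r s
  rw [Nat.add_sub_cancel] at h
  rw [Nat.add_sub_cancel_left] at h'
  rw [h', ← h, mul_comm]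

theorem Finset.sum_range_add_of_eq_zero {M : Type*} [AddCommMonoid M] {f : ℕ → M} {n : ℕ}
    (hf : ∀ i < n, f i = 0) (m : ℕ) :
    ∑ i ∈ range (n + m), f i = ∑ i ∈ range m, f (n + i) := by
  rw [sum_range_add, sum_eq_zero fun i hi => hf i (mem_range.mp hi), zero_add]

open PowerSeries in
theorem Nat.sum_antidiagonal_add_choose_mul_add_choose (p q L : ℕ) :
    ∑ ij ∈ antidiagonal L, (ij.1 + p).choose p * (ij.2 + q).choose q
      = (L + p + q + 1).choose (p + q + 1) := by
  have h := congrArg (fun f : ℤ⟦X⟧ˣ => coeff L f.val) (invOneSubPow_add ℤ (p + 1) (q + 1))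
  simp only [show p + 1 + (q + 1) = p + q + 1 + 1 by ring, Units.val_mul,
    invOneSubPow_val_succ_eq_mk_add_choose, coeff_mul, coeff_mk] at h
  norm_cast at h
  rw [show L + p + q + 1 = p + q + 1 + L by ring, h]
  exact sum_congr rfl fun ij _ => by rw [add_comm ij.1, add_comm ij.2]

namespace PowerSeries

variable {R : Type*} [CommRing R]

theorem coeff_subst_eq_sum_range {a : R⟦X⟧} (ha : constantCoeff a = 0) (f : R⟦X⟧)
    {L B : ℕ} (hLB : L < B) :
    coeff L (f.subst a) = ∑ d ∈ range B, coeff d f * coeff L (a ^ d) := by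
  rw [coeff_subst' (HasSubst.of_constantCoeff_zero' ha)]
  refine finsum_eq_sum_of_support_subset _ fun d hd => ?_
  rw [Function.mem_support] at hd
  rw [coe_range, Set.mem_Iio]
  by_contra! hBd
  obtain ⟨b, hb⟩ := pow_dvd_pow_of_dvd (X_dvd_iff.mpr ha) d
  rw [hb, coeff_X_pow_mul', if_neg (by omega), smul_zero] at hd
  exact hd rfl

theorem subst_two_mul_X_sub_X_sq_invOneSubPow (d : ℕ) :
    (invOneSubPow R d : R⟦X⟧).subst (2 * X - X ^ 2 : R⟦X⟧) = invOneSubPow R (2 * d) := by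
  have ha : HasSubst (2 * X - X ^ 2 : R⟦X⟧) := HasSubst.of_constantCoeff_zero' (by simp)
  have hinv := congrArg (subst (2 * X - X ^ 2 : R⟦X⟧)) (invOneSubPow R d).val_inv
  rw [← coe_substAlgHom ha, map_mul, map_one, invOneSubPow_inv_eq_one_sub_pow, map_pow, map_sub,
    map_one, coe_substAlgHom, subst_X ha,
    show (1 - (2 * X - X ^ 2) : R⟦X⟧) = (1 - X) ^ 2 by ring] at hinv
  have hinv' := (invOneSubPow R (2 * d)).val_inv
  rw [invOneSubPow_inv_eq_one_sub_pow, pow_mul] at hinv'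
  linear_combination (invOneSubPow R (2 * d) : R⟦X⟧) * hinv
    - (invOneSubPow R d : R⟦X⟧).subst (2 * X - X ^ 2 : R⟦X⟧) * hinv'

end PowerSeries

open Polynomial

section CoeffTwoMulXSubXSqPow

variable {R : Type*} [CommRing R]

theorem Polynomial.coeff_C_sub_X_pow (c : R) (m k : ℕ) :
    ((C c - X) ^ m).coeff k = (-1) ^ k * c ^ (m - k) * m.choose k := by
  have hterm (j : ℕ) : (-X) ^ j * C c ^ (m - j) * (m.choose j : R[X])
      = C ((-1) ^ j * c ^ (m - j) * m.choose j) * X ^ j := by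
    simp only [neg_pow (X : R[X]), map_mul, map_pow, map_neg, map_one, map_natCast]
    ring
  simp_rw [sub_eq_neg_add, add_pow, hterm, finsetSum_coeff, coeff_C_mul_X_pow, sum_ite_eq,
    mem_range]
  split_ifs with hk
  · rfl
  · simp [Nat.choose_eq_zero_of_lt (by omega : m < k)]

/-- Both sides are `(-1) ^ s` times the `j`-th coefficient of `X ^ s` times the `s`-th Hasse
derivative of `(C c - X) ^ N`. -/
theorem Polynomial.neg_one_pow_mul_choose_mul_coeff_C_sub_X_pow (c : R) (N j s : ℕ) :
    (-1 : R) ^ s * j.choose s * ((C c - X) ^ N).coeff j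
      = N.choose s * (X ^ s * (C c - X) ^ (N - s)).coeff j := by
  rw [coeff_X_pow_mul', coeff_C_sub_X_pow]
  split_ifs with hsj
  · rw [coeff_C_sub_X_pow]
    have hmul : (N.choose j : R) * j.choose s = N.choose s * (N - s).choose (j - s) := by
      rw [← Nat.cast_mul, ← Nat.cast_mul, Nat.choose_mul hsj]
    by_cases hjN : j ≤ N
    · have hsign : (-1 : R) ^ j = (-1) ^ s * (-1) ^ (j - s) := by
        rw [← pow_add, Nat.add_sub_cancel' hsj]
      have hsq : (-1 : R) ^ s * (-1) ^ s = 1 := by rw [← mul_pow]; norm_num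
      rw [hsign, show N - s - (j - s) = N - j by omega]
      linear_combination ((-1) ^ (j - s) * c ^ (N - j) : R) * hmul
        + ((-1) ^ (j - s) * c ^ (N - j) * N.choose j * j.choose s : R) * hsq
    · rw [Nat.choose_eq_zero_of_lt (not_le.mp hjN), Nat.cast_zero] at hmul ⊢
      linear_combination (-1) ^ (j - s) * c ^ (N - s - (j - s)) * hmul
  · simp [Nat.choose_eq_zero_of_lt (not_le.mp hsj)]

theorem Polynomial.two_mul_X_sub_X_sq_eq : (2 * X - X ^ 2 : R[X]) = X * (C 2 - X) := by
  rw [map_ofNat]; ring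

theorem Polynomial.coeff_two_mul_X_sub_X_sq_pow (N K : ℕ) :
    ((2 * X - X ^ 2 : R[X]) ^ N).coeff K
      = if N ≤ K then ((C 2 - X : R[X]) ^ N).coeff (K - N) else 0 := by
  rw [two_mul_X_sub_X_sq_eq, mul_pow, coeff_X_pow_mul']

theorem sum_neg_one_pow_mul_choose_mul_choose_two_mul (N k : ℕ) :
    ∑ a ∈ range (N + 1), (-1 : R) ^ (a + k) * N.choose a * (2 * a).choose k
      = ((2 * X - X ^ 2 : R[X]) ^ N).coeff k := by
  have hu : (2 * X - X ^ 2 : R[X]) = -(C 1 - X) ^ 2 + 1 := by simp only [map_one]; ring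
  have hterm (a : ℕ) : (-(C 1 - X) ^ 2 : R[X]) ^ a * 1 ^ (N - a) * (N.choose a : R[X])
      = C ((-1 : R) ^ a * N.choose a) * (C 1 - X) ^ (2 * a) := by
    rw [neg_pow, ← pow_mul, one_pow, mul_one, map_mul, map_pow, map_neg, map_one, map_natCast]
    ring
  simp_rw [hu, add_pow, hterm, finsetSum_coeff, coeff_C_mul, coeff_C_sub_X_pow, one_pow]
  refine sum_congr rfl fun a _ => ?_
  ring

theorem neg_one_pow_mul_choose_mul_coeff_two_mul_X_sub_X_sq_pow (N K s : ℕ) :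
    (-1 : R) ^ s * (K - N).choose s * ((2 * X - X ^ 2 : R[X]) ^ N).coeff K
      = N.choose s * (X ^ (2 * s) * (2 * X - X ^ 2 : R[X]) ^ (N - s)).coeff K := by
  rw [coeff_two_mul_X_sub_X_sq_pow, two_mul_X_sub_X_sq_eq, mul_pow, ← mul_assoc, ← pow_add,
    coeff_X_pow_mul']
  split_ifs with hNK hsK hsK
  · rw [neg_one_pow_mul_choose_mul_coeff_C_sub_X_pow, coeff_X_pow_mul']
    rcases le_or_gt s N with hsN | hNs
    · rw [if_pos (by omega), Nat.sub_sub, show N + s = 2 * s + (N - s) by omega]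
    · simp [Nat.choose_eq_zero_of_lt hNs]
  · rw [neg_one_pow_mul_choose_mul_coeff_C_sub_X_pow, coeff_X_pow_mul']
    rcases le_or_gt s N with hsN | hNs
    · rw [if_neg (by omega), mul_zero]
    · simp [Nat.choose_eq_zero_of_lt hNs]
  · omega
  · rw [mul_zero, mul_zero]

theorem sum_range_add_choose_mul_coeff_two_mul_X_sub_X_sq_pow (q : ℕ) {L B : ℕ} (hLB : L < B) :
    ∑ d ∈ range B, ((d + q).choose q : R) * ((2 * X - X ^ 2 : R[X]) ^ d).coeff L
      = (L + 2 * q + 1).choose (2 * q + 1) := by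
  have h := PowerSeries.coeff_subst_eq_sum_range
    (a := (2 * PowerSeries.X - PowerSeries.X ^ 2 : PowerSeries R)) (by simp)
    (PowerSeries.invOneSubPow R (q + 1)) hLB
  rw [PowerSeries.subst_two_mul_X_sub_X_sq_invOneSubPow, show 2 * (q + 1) = 2 * q + 1 + 1 by ring,
    PowerSeries.invOneSubPow_val_succ_eq_mk_add_choose,
    PowerSeries.invOneSubPow_val_succ_eq_mk_add_choose] at h
  simp only [PowerSeries.coeff_mk] at h
  rw [show L + 2 * q + 1 = 2 * q + 1 + L by ring, h]
  refine sum_congr rfl fun d _ => ?_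
  have hu : ((2 * X - X ^ 2 : R[X]) : PowerSeries R) = 2 * PowerSeries.X - PowerSeries.X ^ 2 := by
    rw [← coeToPowerSeries.ringHom_apply, map_sub, map_mul, map_pow, map_ofNat,
      coeToPowerSeries.ringHom_apply, coe_X]
  rw [add_comm q d, ← coeff_coe, Polynomial.coe_pow, hu]

theorem sum_range_neg_one_pow_mul_choose_mul_coeff (r s K : ℕ) :
    ∑ N ∈ range (K + 1), (-1 : R) ^ s * (r + N).choose r * (K - N).choose s
        * ((2 * X - X ^ 2 : R[X]) ^ N).coeff K
      = (r + s).choose s * (K + 2 * r + 1).choose (2 * (r + s) + 1) := by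
  have hterm (N : ℕ) : (-1 : R) ^ s * (r + N).choose r * (K - N).choose s
        * ((2 * X - X ^ 2 : R[X]) ^ N).coeff K
      = (r + N).choose r * N.choose s
        * (if 2 * s ≤ K then ((2 * X - X ^ 2 : R[X]) ^ (N - s)).coeff (K - 2 * s) else 0) := by
    have h := neg_one_pow_mul_choose_mul_coeff_two_mul_X_sub_X_sq_pow (R := R) N K s
    rw [coeff_X_pow_mul'] at h
    linear_combination ((r + N).choose r : R) * h
  simp_rw [hterm]
  by_cases hsK : 2 * s ≤ K
  · obtain ⟨L, rfl⟩ := Nat.exists_eq_add_of_le hsK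
    simp_rw [if_pos hsK, Nat.add_sub_cancel_left]
    rw [show 2 * s + L + 1 = s + (s + L + 1) by ring, sum_range_add_of_eq_zero]
    swap
    · intro N hN
      rw [Nat.choose_eq_zero_of_lt hN, Nat.cast_zero, mul_zero, zero_mul]
    calc _ = ∑ d ∈ range (s + L + 1), ((r + s).choose s : R)
          * ((d + (r + s)).choose (r + s) * ((2 * X - X ^ 2 : R[X]) ^ d).coeff L) := by
          refine sum_congr rfl fun d _ => ?_
          rw [Nat.add_sub_cancel_left, ← mul_assoc, ← Nat.cast_mul, ← Nat.cast_mul,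
            Nat.add_choose_mul_choose, show r + (s + d) = d + (r + s) by ring]
      _ = _ := by
          rw [← mul_sum, sum_range_add_choose_mul_coeff_two_mul_X_sub_X_sq_pow _ (by omega),
            show L + 2 * (r + s) + 1 = 2 * s + L + 2 * r + 1 by ring]
  · simp_rw [if_neg hsK, mul_zero, sum_const_zero]
    rw [Nat.choose_eq_zero_of_lt (n := K + 2 * r + 1) (by omega), Nat.cast_zero, mul_zero]

end CoeffTwoMulXSubXSqPow

theorem sum_Icc_choose_mul_choose_eq (n r s : ℕ) :
    ∑ a ∈ Icc s (n - s), (r + s).choose s * (a + r).choose (a - s)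
        * (if a + r + s ≤ n then (n - a).choose (n - a - r - s) else 0)
      = (r + s).choose s * (n + r + 1).choose (2 * (r + s) + 1) := by
  simp_rw [mul_assoc, ← mul_sum]
  congr 1
  by_cases hn : r + 2 * s ≤ n
  · obtain ⟨L, rfl⟩ := Nat.exists_eq_add_of_le hn
    rw [show r + 2 * s + L - s = r + s + L by omega, ← Ico_add_one_right_eq_Icc,
      sum_Ico_eq_sum_range, show r + s + L + 1 - s = (L + 1) + r by omega, sum_range_add,
      sum_eq_zero (s := range r) fun i _ => ?_, add_zero,
      show r + 2 * s + L + r + 1 = L + (r + s) + (r + s) + 1 by ring,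
      show 2 * (r + s) + 1 = r + s + (r + s) + 1 by ring,
      ← Nat.sum_antidiagonal_add_choose_mul_add_choose, Nat.sum_antidiagonal_eq_sum_range_succ_mk]
    · refine sum_congr rfl fun i hi => ?_
      rw [mem_range] at hi
      rw [if_pos (by omega), show s + i + r = i + (r + s) by ring, Nat.add_sub_cancel_left,
        Nat.choose_symm_add, show r + 2 * s + L - (s + i) = (L - i) + (r + s) by omega,
        show L - i + (r + s) - r - s = L - i by omega, Nat.choose_symm_add]
    · rw [if_neg (by omega), mul_zero]
  · rw [sum_eq_zero fun a ha => ?_, Nat.choose_eq_zero_of_lt (by omega)]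
    rw [mem_Icc] at ha
    rw [if_neg (by omega), mul_zero]

theorem sum_filter_neg_one_pow_mul_choose_eq_coeff {n r : ℕ} (s m : ℕ) (hrn : r ≤ n) :
    ∑ a ∈ (range (m + 1)).filter (fun a => a + r ≤ m), (-1 : ℤ) ^ (n + a + r + s) *
        ((m.choose a * (m - a).choose r * (2 * a).choose (n - r) * (n - m).choose s : ℕ) : ℤ)
      = (-1) ^ s * m.choose r * (n - m).choose s
          * ((2 * X - X ^ 2 : ℤ[X]) ^ (m - r)).coeff (n - r) := by
  rcases le_or_gt r m with hrm | hmr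
  · have hfilter : (range (m + 1)).filter (fun a => a + r ≤ m) = range (m - r + 1) := by
      ext a
      simp only [mem_filter, mem_range]
      omega
    have hsign (a : ℕ) : (-1 : ℤ) ^ (n + a + r + s) = (-1) ^ s * (-1) ^ (a + (n - r)) := by
      rw [← pow_add, show n + a + r + s = s + (a + (n - r)) + 2 * r by omega, pow_add, pow_mul,
        neg_one_sq, one_pow, mul_one]
    rw [hfilter, ← sum_neg_one_pow_mul_choose_mul_choose_two_mul, mul_sum]
    refine sum_congr rfl fun a _ => ?_
    rw [hsign, Nat.choose_mul_choose_sub_comm]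
    push_cast
    ring
  · rw [Nat.choose_eq_zero_of_lt hmr, Nat.cast_zero, mul_zero, zero_mul, zero_mul]
    refine sum_eq_zero fun a ha => ?_
    rw [mem_filter] at ha
    omega

theorem sum_range_sum_filter_neg_one_pow_eq (n r s : ℕ) :
    ∑ m ∈ range (n + 1), ∑ a ∈ (range (m + 1)).filter (fun a => a + r ≤ m),
        (-1 : ℤ) ^ (n + a + r + s) *
          ((m.choose a * (m - a).choose r * (2 * a).choose (n - r) * (n - m).choose s : ℕ) : ℤ)
      = (r + s).choose s * (n + r + 1).choose (2 * (r + s) + 1) := by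
  rcases le_or_gt r n with hrn | hnr
  · obtain ⟨K, rfl⟩ := Nat.exists_eq_add_of_le hrn
    rw [sum_congr rfl fun m _ => sum_filter_neg_one_pow_mul_choose_eq_coeff s m hrn, add_assoc,
      sum_range_add_of_eq_zero]
    · simp_rw [Nat.add_sub_add_left, Nat.add_sub_cancel_left]
      rw [sum_range_neg_one_pow_mul_choose_mul_coeff, show r + K + r + 1 = K + 2 * r + 1 by ring]
    · intro m hm
      rw [Nat.choose_eq_zero_of_lt hm, Nat.cast_zero, mul_zero, zero_mul, zero_mul]
  · rw [Nat.choose_eq_zero_of_lt (n := n + r + 1) (by omega), Nat.cast_zero, mul_zero]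
    refine sum_eq_zero fun m hm => sum_eq_zero fun a ha => ?_
    rw [mem_range] at hm
    rw [mem_filter] at ha
    omega

/- The `if`-guard makes `C(n-a, n-a-r-s)` vanish when `a + r + s > n`, which truncated
subtraction would not; the filter `a + r ≤ m` encodes `0 ≤ a ≤ m - r`; and `(-1)^(n+a+r+s)`
has the parity of `(-1)^(n-a-r-s)` on every nonvanishing term. -/
theorem stmt_8 (n r s : ℕ) :
    (∑ a ∈ Finset.Icc s (n - s),
        (((r + s).choose s * (a + r).choose (a - s)
          * (if a + r + s ≤ n then (n - a).choose (n - a - r - s) else 0) : ℕ) : ℤ))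
      = ∑ m ∈ Finset.range (n + 1),
          ∑ a ∈ (Finset.range (m + 1)).filter (fun a => a + r ≤ m),
            (-1 : ℤ) ^ (n + a + r + s) *
              ((m.choose a * (m - a).choose r * (2 * a).choose (n - r)
                * (n - m).choose s : ℕ) : ℤ) := by
  rw [← Nat.cast_sum, sum_Icc_choose_mul_choose_eq, sum_range_sum_filter_neg_one_pow_eq,
    Nat.cast_mul]
end

section
/- Let k ≥ 0 and n, p ≥ 0. The number of words π ∈ [2k+1]^n with des_E(π) = p, where E is the set of even positive integers (equivalently, the number of words π ∈ [2k+1]^n with ris_E(π) = p), equals Σ_{m=0}^{n} Σ_{j=0}^{m} Σ_{i=0}^{j} (−1)^{n+p+j} · 2^{m−i} · C(m, j) · C(j, i) · C(k·j, n−i) · C(n−m, p). -/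
open Finset

/-- The number of rises of the word `w` whose first element satisfies `X`. -/
def riseCount (X : ℕ → Prop) [DecidablePred X] {k n : ℕ} (w : Fin n → Fin k) : ℕ :=
  (Finset.univ.filter (fun p : Fin n × Fin n =>
    (p.1 : ℕ) + 1 = (p.2 : ℕ) ∧ (w p.1 : ℕ) < (w p.2 : ℕ) ∧ X ((w p.1 : ℕ) + 1))).card

/-!
Expanding `t ^ d = ∑ q, C(d, q) (t - 1) ^ q`, the number of words with exactly `p` descents from
`E` is `∑ q, (-1) ^ (p + q) C(q, p) W_q`, where `W_q` counts words together with a chosen `q`-set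
of their `E`-descents. Cutting such a word at the unchosen positions splits it into `n - q`
blocks, each a strictly decreasing chain all of whose letters except the last are even. Over
`[2k+1]` these chains have generating function `(2 + z)(1 + z)^k - 2`, so
`W_q = [z^n] ((2 + z)(1 + z)^k - 2)^(n - q)`; formally, the block decomposition is a recursion
on the first letter of the word. The map `x ↦ 2k + 2 - x` preserves parity and turns rises into
descents.
-/

theorem sum_fun_fin_succ {α M : Type*} [AddCommMonoid M] [Fintype α] (n : ℕ)
    (f : (Fin (n + 1) → α) → M) :
    ∑ w, f w = ∑ v : α, ∑ w : Fin n → α, f (Fin.cons v w) := by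
  rw [← (Fin.consEquiv fun _ => α).sum_comp f, Fintype.sum_prod_type]
  rfl

theorem sum_fin_ite_lt {K : ℕ} {M : Type*} [AddCommMonoid M] (v : Fin K) (f : ℕ → M) :
    ∑ u : Fin K, (if (u : ℕ) < v then f u else 0) = ∑ u ∈ range v, f u := by
  rw [← sum_filter, ← Nat.Iio_eq_range, ← Fin.map_valEmbedding_Iio, sum_map]
  exact sum_congr (by ext; simp) fun _ _ => rfl

-- Mathlib's inversion formula `fwdDiff_iter_choose_zero` carries the sign `(-1) ^ (d - q)`;
-- it differs from ours by the factor `(-1) ^ (p + d)`, harmless as the sum vanishes unless `d = p`.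
theorem sum_neg_one_pow_choose_mul_choose {d N : ℕ} (p : ℕ) (hd : d ≤ N) :
    ∑ q ∈ range (N + 1), (-1 : ℤ) ^ (p + q) * (q.choose p : ℤ) * (d.choose q : ℤ)
      = if d = p then 1 else 0 := by
  have hinv := fwdDiff_iter_choose_zero p d
  rw [fwdDiff_iter_eq_sum_shift] at hinv
  rw [← sum_subset (range_subset_range.2 (by omega : d + 1 ≤ N + 1)) fun q _ hq => by
    rw [Nat.choose_eq_zero_of_lt (n := d) (by simpa using hq)]; simp]
  calc _ = (-1) ^ (p + d) * ∑ q ∈ range (d + 1),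
        ((-1 : ℤ) ^ (d - q) * d.choose q) • ((0 + q • 1).choose p : ℤ) := by
        rw [mul_sum]
        refine sum_congr rfl fun q hq => ?_
        have : (-1 : ℤ) ^ (p + q) = (-1) ^ (p + d) * (-1) ^ (d - q) := by
          have := mem_range.1 hq
          rw [← pow_add, (by omega : p + d + (d - q) = p + q + 2 * (d - q)), pow_add _ (p + q),
            pow_mul]
          simp
        simp only [this, smul_eq_mul, zero_add, mul_one]
        ring
    _ = _ := by rw [hinv]; split_ifs with h <;> simp [h]

theorem card_filter_eq_sum_choose {α : Type*} [Fintype α] (f : α → ℕ) {N : ℕ}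
    (hf : ∀ x, f x ≤ N) (p : ℕ) :
    (#{x | f x = p} : ℤ)
      = ∑ q ∈ range (N + 1),
          (-1 : ℤ) ^ (p + q) * (q.choose p : ℤ) * ((∑ x, (f x).choose q : ℕ) : ℤ) := by
  simp_rw [Nat.cast_sum, mul_sum]
  rw [sum_comm, card_filter, Nat.cast_sum]
  refine sum_congr rfl fun x _ => ?_
  rw [sum_neg_one_pow_choose_mul_choose p (hf x)]
  simp

section Descents

variable (P : ℕ → Prop) [DecidablePred P] (K : ℕ)

def descChooseSum (n q : ℕ) : ℕ :=
  ∑ w : Fin n → Fin K, (descCount P w).choose q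

def descChooseSumCons (n q : ℕ) (v : Fin K) : ℕ :=
  ∑ w : Fin n → Fin K, (descCount P (Fin.cons v w : Fin (n + 1) → Fin K)).choose q

variable {K}

theorem descCount_cons_cons {n : ℕ} (v u : Fin K) (w : Fin n → Fin K) :
    descCount P (Fin.cons v (Fin.cons u w) : Fin (n + 2) → Fin K)
      = descCount P (Fin.cons u w : Fin (n + 1) → Fin K)
        + if (u : ℕ) < v ∧ P (v + 1) then 1 else 0 := by
  simp only [descCount, card_filter, Fintype.sum_prod_type, Fin.sum_univ_succ, Fin.cons_zero,
    Fin.cons_succ, Fin.val_zero, Fin.val_succ]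
  simp only [Nat.add_right_cancel_iff]
  simp
  omega

theorem descCount_le_pred {n : ℕ} (w : Fin n → Fin K) : descCount P w ≤ n - 1 := by
  calc descCount P w ≤ #(range (n - 1)) := by
        refine card_le_card_of_injOn (fun p => (p.1 : ℕ)) (fun p hp => ?_)
          fun p hp p' hp' h => ?_
        · simp at hp ⊢; omega
        · simp at hp hp' h
          exact Prod.ext (Fin.ext h) (Fin.ext (by omega))
    _ = n - 1 := card_range _

theorem descChooseSum_succ (n q : ℕ) :
    descChooseSum P K (n + 1) q = ∑ v, descChooseSumCons P K n q v :=
  sum_fun_fin_succ n _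

theorem descChooseSumCons_zero (n : ℕ) (v : Fin K) : descChooseSumCons P K n 0 v = K ^ n := by
  simp [descChooseSumCons]

theorem descChooseSumCons_eq_zero {n q : ℕ} (hq : n < q) (v : Fin K) :
    descChooseSumCons P K n q v = 0 :=
  sum_eq_zero fun w _ => Nat.choose_eq_zero_of_lt ((descCount_le_pred P _).trans_lt (by omega))

theorem descChooseSumCons_succ_succ (n q : ℕ) (v : Fin K) :
    descChooseSumCons P K (n + 1) (q + 1) v
      = ∑ u, descChooseSumCons P K n (q + 1) u
        + ∑ u : Fin K,
            if (u : ℕ) < v ∧ P (v + 1) then descChooseSumCons P K n q u else 0 := by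
  rw [descChooseSumCons, sum_fun_fin_succ, ← sum_add_distrib]
  refine sum_congr rfl fun u _ => ?_
  simp only [descChooseSumCons, descCount_cons_cons]
  split_ifs
  · simp only [Nat.choose_succ_succ', sum_add_distrib]
    exact add_comm _ _
  · simp

end Descents

open Polynomial

/- The coefficient of `X ^ r` in `chainPoly P v` counts the chains `v > x₁ > ⋯ > xᵣ` of
letters such that `P` holds at every letter but the last (a letter `x` having value `x + 1`).
These chains are the blocks of the decomposition, so `X * blockPoly P K` is the generating
function of all blocks over an alphabet of size `K`. -/
noncomputable def chainPoly (P : ℕ → Prop) [DecidablePred P] (v : ℕ) : ℤ[X] :=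
  1 + if P (v + 1) then X * ∑ u : Fin v, chainPoly P u else 0

theorem chainPoly_eq (P : ℕ → Prop) [DecidablePred P] (v : ℕ) :
    chainPoly P v = 1 + if P (v + 1) then X * ∑ u ∈ range v, chainPoly P u else 0 := by
  rw [chainPoly, Fin.sum_univ_eq_sum_range (chainPoly P)]

section Blocks

variable (P : ℕ → Prop) [DecidablePred P] (K : ℕ)

noncomputable def blockPoly : ℤ[X] := ∑ u ∈ range K, chainPoly P u

variable {K}

theorem eval_zero_chainPoly (v : ℕ) : (chainPoly P v).eval 0 = 1 := by
  rw [chainPoly_eq]; split_ifs <;> simp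

theorem eval_zero_blockPoly : (blockPoly P K).eval 0 = K := by
  simp [blockPoly, eval_finsetSum, eval_zero_chainPoly]

theorem coeff_zero_blockPoly_pow_mul_chainPoly (n v : ℕ) :
    (blockPoly P K ^ n * chainPoly P v).coeff 0 = K ^ n := by
  simp [coeff_zero_eq_eval_zero, eval_zero_blockPoly, eval_zero_chainPoly]

theorem descChooseSum_succ_eq_coeff {n : ℕ}
    (h : ∀ q ≤ n, ∀ v : Fin K,
      (descChooseSumCons P K n q v : ℤ) = (blockPoly P K ^ (n - q) * chainPoly P v).coeff q)
    (q : ℕ) : (descChooseSum P K (n + 1) q : ℤ) = (blockPoly P K ^ (n + 1 - q)).coeff q := by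
  rw [descChooseSum_succ, Nat.cast_sum]
  rcases le_or_gt q n with hq | hq
  · simp_rw [h q hq]
    rw [← finsetSum_coeff, ← mul_sum, Fin.sum_univ_eq_sum_range (chainPoly P), ← blockPoly,
      ← pow_succ, Nat.sub_add_comm hq]
  · simp [descChooseSumCons_eq_zero P hq, Nat.sub_eq_zero_of_le hq, coeff_one]
    omega

theorem descChooseSumCons_eq_coeff {n q : ℕ} (hq : q ≤ n) (v : Fin K) :
    (descChooseSumCons P K n q v : ℤ) = (blockPoly P K ^ (n - q) * chainPoly P v).coeff q := by
  induction n generalizing q v with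
  | zero =>
    obtain rfl : q = 0 := by omega
    simp only [descChooseSumCons_zero, coeff_zero_blockPoly_pow_mul_chainPoly, Nat.cast_pow]
  | succ n ih =>
    obtain _ | q := q
    · simp only [descChooseSumCons_zero, coeff_zero_blockPoly_pow_mul_chainPoly, Nat.cast_pow,
        Nat.sub_zero]
    rw [descChooseSumCons_succ_succ, ← descChooseSum_succ, Nat.cast_add,
      descChooseSum_succ_eq_coeff P fun q hq => ih hq, Nat.cast_sum, Nat.add_sub_add_right,
      chainPoly_eq]
    by_cases hv : P (v + 1)
    · simp only [hv, and_true, if_true, Nat.cast_ite, Nat.cast_zero]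
      simp_rw [ih (q := q) (by omega)]
      rw [sum_fin_ite_lt v fun u => (blockPoly P K ^ (n - q) * chainPoly P u).coeff q,
        ← finsetSum_coeff, ← mul_sum, mul_add, mul_one, coeff_add, mul_left_comm, coeff_X_mul]
    · simp [hv]

end Blocks

theorem descChooseSum_eq_coeff (P : ℕ → Prop) [DecidablePred P] (K n q : ℕ) :
    (descChooseSum P K n q : ℤ) = (blockPoly P K ^ (n - q)).coeff q := by
  cases n with
  | zero => cases q <;> simp [descChooseSum, descCount, coeff_one]
  | succ n =>
    exact descChooseSum_succ_eq_coeff P (fun _ hq v => descChooseSumCons_eq_coeff P hq v) q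

theorem X_mul_blockPoly_even (k : ℕ) :
    X * blockPoly (fun x => 0 < x ∧ x % 2 = 0) (2 * k + 1) = (X + 2) * (1 + X) ^ k - 2 := by
  induction k with
  | zero =>
    rw [blockPoly, sum_range_one, chainPoly_eq, if_neg (by omega)]
    ring
  | succ k ih =>
    have hodd : chainPoly (fun x => 0 < x ∧ x % 2 = 0) (2 * k + 1)
        = 1 + X * blockPoly (fun x => 0 < x ∧ x % 2 = 0) (2 * k + 1) := by
      rw [chainPoly_eq, if_pos (by omega), blockPoly]
    have heven : chainPoly (fun x => 0 < x ∧ x % 2 = 0) (2 * k + 2) = 1 := by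
      rw [chainPoly_eq, if_neg (by omega), add_zero]
    rw [show 2 * (k + 1) + 1 = 2 * k + 1 + 1 + 1 by ring, blockPoly, sum_range_succ,
      sum_range_succ, ← blockPoly, hodd, heven]
    linear_combination (1 + X) * ih

theorem neg_one_pow_sub_eq_neg_one_pow_add {m j : ℕ} (h : j ≤ m) :
    (-1 : ℤ) ^ (m - j) = (-1) ^ (m + j) := by
  rw [(by omega : m + j = m - j + 2 * j), pow_add, pow_mul]
  simp

theorem coeff_X_add_two_mul_one_add_X_pow_sub_two_pow (k m n : ℕ) (hmn : m ≤ n) :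
    (((X + 2) * (1 + X) ^ k - 2 : ℤ[X]) ^ m).coeff n
      = ∑ j ∈ range (m + 1), ∑ i ∈ range (j + 1), (-1 : ℤ) ^ (m + j) *
          ((2 ^ (m - i) * m.choose j * j.choose i * (k * j).choose (n - i) : ℕ) : ℤ) := by
  rw [sub_eq_add_neg, add_pow, finsetSum_coeff]
  refine sum_congr rfl fun j hj => ?_
  have hjm : j ≤ m := Nat.lt_succ_iff.1 (mem_range.1 hj)
  have hC : (-2 : ℤ[X]) ^ (m - j) * (m.choose j : ℤ[X])
      = C ((-2 : ℤ) ^ (m - j) * m.choose j) := by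
    simp
  rw [mul_assoc, hC, coeff_mul_C, mul_pow, ← pow_mul, ← C_ofNat, coeff_mul,
    Nat.sum_antidiagonal_eq_sum_range_succ_mk,
    ← sum_subset (range_subset_range.2 (by omega : j + 1 ≤ n + 1)) fun i _ hi => by
      rw [coeff_X_add_C_pow, Nat.choose_eq_zero_of_lt (by simpa using hi)]; simp,
    sum_mul]
  refine sum_congr rfl fun i hi => ?_
  have hij : i ≤ j := Nat.lt_succ_iff.1 (mem_range.1 hi)
  have h2 : (2 : ℤ) ^ (m - i) = 2 ^ (j - i) * 2 ^ (m - j) := by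
    rw [← pow_add]; congr 1; omega
  rw [coeff_X_add_C_pow, coeff_one_add_X_pow, neg_pow, neg_one_pow_sub_eq_neg_one_pow_add hjm]
  push_cast
  rw [h2]
  ring

theorem sum_choose_descCount_even (k n q : ℕ) (hq : q ≤ n) :
    ((∑ w : Fin n → Fin (2 * k + 1),
        (descCount (fun x => 0 < x ∧ x % 2 = 0) w).choose q : ℕ) : ℤ)
      = (((X + 2) * (1 + X) ^ k - 2 : ℤ[X]) ^ (n - q)).coeff n := by
  rw [← X_mul_blockPoly_even, mul_pow, coeff_X_pow_mul', if_pos (Nat.sub_le n q),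
    Nat.sub_sub_self hq]
  exact descChooseSum_eq_coeff _ _ n q

theorem card_descCount_even_eq (k n p : ℕ) :
    (#{w : Fin n → Fin (2 * k + 1) | descCount (fun x => 0 < x ∧ x % 2 = 0) w = p} : ℤ)
      = ∑ m ∈ range (n + 1), ∑ j ∈ range (m + 1), ∑ i ∈ range (j + 1),
          (-1 : ℤ) ^ (n + p + j) * ((2 ^ (m - i) * m.choose j * j.choose i
            * (k * j).choose (n - i) * (n - m).choose p : ℕ) : ℤ) := by
  rw [card_filter_eq_sum_choose _ (fun w => (descCount_le_pred _ w).trans (Nat.sub_le n 1)) p,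
    ← sum_range_reflect]
  refine sum_congr rfl fun m hm => ?_
  have hmn : m ≤ n := Nat.lt_succ_iff.1 (mem_range.1 hm)
  rw [Nat.add_sub_cancel, sum_choose_descCount_even k n _ (Nat.sub_le n m),
    Nat.sub_sub_self hmn, coeff_X_add_two_mul_one_add_X_pow_sub_two_pow k m n hmn, mul_sum]
  refine sum_congr rfl fun j _ => ?_
  rw [mul_sum]
  refine sum_congr rfl fun i _ => ?_
  have hsign : (-1 : ℤ) ^ (n + p + j) = (-1) ^ (p + (n - m)) * (-1) ^ (m + j) := by
    rw [← pow_add]; congr 1; omega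
  rw [hsign]
  push_cast
  ring

theorem riseCount_eq_descCount_rev {P : ℕ → Prop} [DecidablePred P] {K n : ℕ}
    (hP : ∀ x < K, P (x + 1) ↔ P (K - x)) (w : Fin n → Fin K) :
    riseCount P w = descCount P (Fin.rev ∘ w) := by
  unfold riseCount descCount
  congr 1
  refine filter_congr fun x _ => ?_
  have h1 := (w x.1).isLt
  have h2 := (w x.2).isLt
  simp only [Function.comp_apply, Fin.val_rev]
  rw [hP _ h1, (by omega : K - (w x.1 + 1) + 1 = K - w x.1)]
  constructor <;> rintro ⟨h, h', h''⟩ <;> exact ⟨h, by omega, h''⟩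

theorem card_riseCount_eq_card_descCount {P : ℕ → Prop} [DecidablePred P] {K n : ℕ}
    (hP : ∀ x < K, P (x + 1) ↔ P (K - x)) (p : ℕ) :
    #{w : Fin n → Fin K | riseCount P w = p} = #{w : Fin n → Fin K | descCount P w = p} := by
  refine card_nbij' (Fin.rev ∘ ·) (Fin.rev ∘ ·) (fun w hw => ?_) (fun w hw => ?_)
    (fun w _ => ?_) (fun w _ => ?_)
  · simpa [← riseCount_eq_descCount_rev hP] using hw
  · simpa [riseCount_eq_descCount_rev hP, Function.comp_def] using hw
  · ext; simp
  · ext; simp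

theorem stmt_13 (k n p : ℕ) :
    ((Finset.univ.filter (fun w : Fin n → Fin (2 * k + 1) =>
          descCount (fun x => 0 < x ∧ x % 2 = 0) w = p)).card : ℤ)
        = ∑ m ∈ Finset.range (n + 1), ∑ j ∈ Finset.range (m + 1),
            ∑ i ∈ Finset.range (j + 1),
              (-1 : ℤ) ^ (n + p + j) *
                ((2 ^ (m - i) * m.choose j * j.choose i * (k * j).choose (n - i)
                  * (n - m).choose p : ℕ) : ℤ)
      ∧ ((Finset.univ.filter (fun w : Fin n → Fin (2 * k + 1) =>
            riseCount (fun x => 0 < x ∧ x % 2 = 0) w = p)).card : ℤ)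
        = ∑ m ∈ Finset.range (n + 1), ∑ j ∈ Finset.range (m + 1),
            ∑ i ∈ Finset.range (j + 1),
              (-1 : ℤ) ^ (n + p + j) *
                ((2 ^ (m - i) * m.choose j * j.choose i * (k * j).choose (n - i)
                  * (n - m).choose p : ℕ) : ℤ) := by
  have hE : ∀ x < 2 * k + 1,
      (0 < x + 1 ∧ (x + 1) % 2 = 0) ↔ (0 < 2 * k + 1 - x ∧ (2 * k + 1 - x) % 2 = 0) :=
    fun x _ => by omega
  refine ⟨card_descCount_even_eq k n p, ?_⟩
  rw [card_riseCount_eq_card_descCount hE]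
  exact card_descCount_even_eq k n p
end
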